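/- arXiv:1704.06048 — 2 statements merged into one kernel-verified Lean document; each statement's English description precedes it below -/
import Mathlib

section
/- Fix n ≥ 4 and s ∈ (n/2+1, n). Suppose F : [0,1] → ℝ is C¹ and satisfies F' + (n-s)F² + ((2s-n-1)r/ρ₀ + n/r)F + (2s-n-1)/ρ₀ = 0 on (0,1), where ρ₀ = ρ₀(r) = (1-r²)/2, with F(0) = 0. Then F(r) ≤ 0 for all r ∈ [0,1]. -/
open Real Set

/-! With `c = 2s - n - 1 > 0` and `ρ₀ = (1 - r²)/2`, the equation reads
`F' + (c r/ρ₀ + n/r) F = -(n - s) F² - c/ρ₀ < 0`. The integrating factor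
`μ = rⁿ ρ₀^(-c)` has logarithmic derivative `c r/ρ₀ + n/r`, so `μ F` is strictly decreasing
and vanishes at `0`; hence `F < 0` on `(0, 1)`, and `F ≤ 0` on `[0, 1]` by continuity. -/

theorem neg_of_hasDerivAt_add_mul_neg {μ F F' a : ℝ → ℝ} {x : ℝ} (hx : 0 < x)
    (hcont : ContinuousOn (fun r => μ r * F r) (Icc 0 x)) (hF0 : F 0 = 0)
    (hμpos : ∀ r ∈ Ioc 0 x, 0 < μ r)
    (hμ : ∀ r ∈ Ioo 0 x, HasDerivAt μ (a r * μ r) r)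
    (hF : ∀ r ∈ Ioo 0 x, HasDerivAt F (F' r) r)
    (hneg : ∀ r ∈ Ioo 0 x, F' r + a r * F r < 0) : F x < 0 := by
  have hanti : StrictAntiOn (fun r => μ r * F r) (Icc 0 x) := by
    refine strictAntiOn_of_hasDerivWithinAt_neg (convex_Icc 0 x) hcont
      (f' := fun r => μ r * (F' r + a r * F r)) (fun r hr => ?_) (fun r hr => ?_)
    · rw [interior_Icc] at hr
      refine (((hμ r hr).mul (hF r hr)).congr_deriv ?_).hasDerivWithinAt
      ring
    · rw [interior_Icc] at hr
      exact mul_neg_of_pos_of_neg (hμpos r (Ioo_subset_Ioc_self hr)) (hneg r hr)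
  have hG : μ x * F x < μ 0 * F 0 :=
    hanti (left_mem_Icc.2 hx.le) (right_mem_Icc.2 hx.le) hx
  rw [hF0, mul_zero] at hG
  exact neg_of_mul_neg_right hG (hμpos x ⟨hx, le_rfl⟩).le

theorem hasDerivAt_pow_eq_div_mul (n : ℕ) {r : ℝ} (hr : r ≠ 0) :
    HasDerivAt (fun y => y ^ n) (n / r * r ^ n) r := by
  refine (hasDerivAt_pow n r).congr_deriv ?_
  rcases n with _ | n
  · simp
  · rw [pow_succ]
    field_simp
    simp

theorem HasDerivAt.rpow_const_eq_div_mul {f : ℝ → ℝ} {f' x : ℝ} (hf : HasDerivAt f f' x)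
    (hfx : f x ≠ 0) (p : ℝ) :
    HasDerivAt (fun y => f y ^ p) (p * f' / f x * f x ^ p) x := by
  refine (hf.rpow_const (Or.inl hfx)).congr_deriv ?_
  rw [rpow_sub_one hfx]
  ring

noncomputable def integratingFactor (n : ℕ) (c r : ℝ) : ℝ := r ^ n * ((1 - r ^ 2) / 2) ^ (-c)

theorem integratingFactor_pos (n : ℕ) (c : ℝ) {r : ℝ} (hr : r ∈ Ioo 0 1) :
    0 < integratingFactor n c r :=
  mul_pos (pow_pos hr.1 n) (rpow_pos_of_pos (by nlinarith [hr.1, hr.2]) _)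

theorem continuousOn_integratingFactor (n : ℕ) (c : ℝ) :
    ContinuousOn (integratingFactor n c) (Ico 0 1) := by
  refine (continuous_pow n).continuousOn.mul (ContinuousOn.rpow_const (by fun_prop) ?_)
  intro r hr
  left
  nlinarith [hr.1, hr.2]

theorem hasDerivAt_integratingFactor (n : ℕ) (c : ℝ) {r : ℝ} (hr : r ∈ Ioo 0 1) :
    HasDerivAt (integratingFactor n c)
      ((c * r / ((1 - r ^ 2) / 2) + n / r) * integratingFactor n c r) r := by
  have hρ : HasDerivAt (fun y : ℝ => (1 - y ^ 2) / 2) (-r) r := by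
    refine (((hasDerivAt_pow 2 r).const_sub 1).div_const 2).congr_deriv ?_
    push_cast
    ring
  have hρ0 : (1 - r ^ 2) / 2 ≠ 0 := by nlinarith [hr.1, hr.2]
  refine ((hasDerivAt_pow_eq_div_mul n hr.1.ne').mul
    (hρ.rpow_const_eq_div_mul hρ0 (-c))).congr_deriv ?_
  unfold integratingFactor
  ring

theorem ode_F_nonpos_general (n : ℕ) (s : ℝ)
    (hs : s ∈ Set.Ioo ((n : ℝ) / 2 + 1) (n : ℝ))
    (F : ℝ → ℝ)
    (hF : ContDiffOn ℝ 1 F (Set.Icc (0 : ℝ) 1))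
    (hODE : ∀ r ∈ Set.Ioo (0 : ℝ) 1,
      deriv F r + ((n : ℝ) - s) * (F r) ^ 2 +
        ((2 * s - (n : ℝ) - 1) * r / ((1 - r ^ 2) / 2) + (n : ℝ) / r) * F r +
        (2 * s - (n : ℝ) - 1) / ((1 - r ^ 2) / 2) = 0)
    (hF0 : F 0 = 0) :
    ∀ r ∈ Set.Icc (0 : ℝ) 1, F r ≤ 0 := by
  set c := 2 * s - (n : ℝ) - 1
  have hc : 0 < c := by linarith [hs.1]
  have hFc : ContinuousOn F (Icc 0 1) := hF.continuousOn
  have hFderiv : ∀ r ∈ Ioo (0 : ℝ) 1, HasDerivAt F (deriv F r) r := fun r hr =>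
    ((hF.differentiableOn one_ne_zero r (Ioo_subset_Icc_self hr)).differentiableAt
      (Icc_mem_nhds hr.1 hr.2)).hasDerivAt
  have hriccati : ∀ r ∈ Ioo (0 : ℝ) 1,
      deriv F r + (c * r / ((1 - r ^ 2) / 2) + n / r) * F r < 0 := by
    intro r hr
    have hquad : 0 ≤ ((n : ℝ) - s) * F r ^ 2 := mul_nonneg (by linarith [hs.2]) (sq_nonneg _)
    have hsource : 0 < c / ((1 - r ^ 2) / 2) := div_pos hc (by nlinarith [hr.1, hr.2])
    linarith [hODE r hr]
  have hnonpos : ∀ x ∈ Ioo (0 : ℝ) 1, F x ≤ 0 := fun x hx =>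
    (neg_of_hasDerivAt_add_mul_neg hx.1
      (((continuousOn_integratingFactor n c).mono (Icc_subset_Ico_right hx.2)).mul
        (hFc.mono (Icc_subset_Icc_right hx.2.le))) hF0
      (fun r hr => integratingFactor_pos n c ⟨hr.1, hr.2.trans_lt hx.2⟩)
      (fun r hr => hasDerivAt_integratingFactor n c ⟨hr.1, hr.2.trans hx.2⟩)
      (fun r hr => hFderiv r ⟨hr.1, hr.2.trans hx.2⟩)
      (fun r hr => hriccati r ⟨hr.1, hr.2.trans hx.2⟩)).le
  rw [← closure_Ioo zero_ne_one]
  exact le_on_closure hnonpos (by rwa [closure_Ioo zero_ne_one]) continuousOn_const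

theorem ode_F_nonpos (n : ℕ) (hn : 4 ≤ n) (s : ℝ)
    (hs : s ∈ Set.Ioo ((n : ℝ) / 2 + 1) (n : ℝ))
    (F : ℝ → ℝ)
    (hF : ContDiffOn ℝ 1 F (Set.Icc (0 : ℝ) 1))
    (hODE : ∀ r ∈ Set.Ioo (0 : ℝ) 1,
      deriv F r + ((n : ℝ) - s) * (F r) ^ 2 +
        ((2 * s - (n : ℝ) - 1) * r / ((1 - r ^ 2) / 2) + (n : ℝ) / r) * F r +
        (2 * s - (n : ℝ) - 1) / ((1 - r ^ 2) / 2) = 0)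
    (hF0 : F 0 = 0) :
    ∀ r ∈ Set.Icc (0 : ℝ) 1, F r ≤ 0 :=
  ode_F_nonpos_general n s hs F hF hODE hF0
end

section
/- Fix n ≥ 4 and s ∈ (n/2+1, n). Suppose F : [0,1) → ℝ is C¹, satisfies F' + (n-s)F² + ((2s-n-1)r/ρ₀ + n/r)F + (2s-n-1)/ρ₀ = 0 on (0,1) with ρ₀(r) = (1-r²)/2, F(0) = 0, and F ≤ 0 on [0,1). Then 0 < 1 + r·F(r) ≤ 1 for all r ∈ [0,1). -/
/-!
Put `G r = 1 + r F(r)`, so that `G(0) = 1` and `G ≤ 1` because `F ≤ 0`. At a zero `z ∈ (0, 1)` of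
`G` we have `F(z) = -1/z`; there the `ρ₀`-terms of the equation cancel and it gives `F'(z) = s/z²`,
hence `G'(z) = (s - 1)/z > 0`. A continuous function that starts positive cannot reach its first
zero with positive derivative, so `G` never vanishes on `[0, 1)`.
-/

open Real Set Filter Topology

theorem HasDerivWithinAt.nonpos_of_eventually_le_nhdsLT {f : ℝ → ℝ} {f' x : ℝ}
    (hf : HasDerivWithinAt f f' (Iio x) x) (hmin : ∀ᶠ y in 𝓝[<] x, f x ≤ f y) : f' ≤ 0 := by
  have hslope : Tendsto (slope f x) (𝓝[<] x) (𝓝 f') := by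
    simpa using (hasDerivWithinAt_iff_tendsto_slope' (s := Iio x) (lt_irrefl x)).mp hf
  refine le_of_tendsto hslope ?_
  filter_upwards [hmin, self_mem_nhdsWithin] with y hy hyx
  rw [slope_def_field]
  exact div_nonpos_of_nonneg_of_nonpos (sub_nonneg.mpr hy) (sub_nonpos.mpr hyx.le)

theorem ContinuousOn.exists_first_zero {G : ℝ → ℝ} {a b : ℝ} (hab : a ≤ b)
    (hG : ContinuousOn G (Icc a b)) (ha : 0 < G a) (hb : G b ≤ 0) :
    ∃ z ∈ Ioc a b, G z = 0 ∧ ∀ y ∈ Ico a z, 0 < G y := by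
  set S := Icc a b ∩ G ⁻¹' Iic 0
  have hSbdd : BddBelow S := ⟨a, fun y hy => hy.1.1⟩
  have hzS : sInf S ∈ S :=
    (hG.preimage_isClosed_of_isClosed isClosed_Icc isClosed_Iic).csInf_mem
      ⟨b, ⟨hab, le_rfl⟩, hb⟩ hSbdd
  set z := sInf S
  have hpos : ∀ y ∈ Ico a z, 0 < G y := fun y hy => by
    by_contra! h
    exact hy.2.not_ge (csInf_le hSbdd ⟨⟨hy.1, hy.2.le.trans hzS.1.2⟩, h⟩)
  obtain ⟨w, hw, hGw⟩ :=
    intermediate_value_Icc' hzS.1.1 (hG.mono (Icc_subset_Icc_right hzS.1.2)) ⟨hzS.2, ha.le⟩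
  have hGz : G z = 0 := by
    rcases hw.2.lt_or_eq with hwz | hwz
    · exact absurd hGw (hpos w ⟨hw.1, hwz⟩).ne'
    · exact hwz ▸ hGw
  have haz : a < z := hzS.1.1.lt_of_ne fun h => by rw [← h] at hGz; linarith
  exact ⟨z, ⟨haz, hzS.1.2⟩, hGz, hpos⟩

theorem ContinuousOn.pos_of_hasDerivWithinAt_Iio_pos_of_eq_zero {G : ℝ → ℝ} {a b : ℝ}
    (hG : ContinuousOn G (Icc a b)) (ha : 0 < G a)
    (hzero : ∀ z ∈ Ioc a b, G z = 0 → ∃ c > 0, HasDerivWithinAt G c (Iio z) z) :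
    ∀ x ∈ Icc a b, 0 < G x := by
  intro x hx
  by_contra! hGx
  obtain ⟨z, hz, hGz, hpos⟩ := (hG.mono (Icc_subset_Icc_right hx.2)).exists_first_zero hx.1 ha hGx
  obtain ⟨c, hc, hderiv⟩ := hzero z ⟨hz.1, hz.2.trans hx.2⟩ hGz
  have hmin : ∀ᶠ y in 𝓝[<] z, G z ≤ G y := by
    filter_upwards [Ico_mem_nhdsLT hz.1] with y hy
    exact hGz ▸ (hpos y hy).le
  exact (hderiv.nonpos_of_eventually_le_nhdsLT hmin).not_gt hc

theorem add_mul_eq_of_riccati_of_mul_eq_neg_one {n s z F₀ F₁ : ℝ} (hz : z ≠ 0)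
    (hz1 : 1 - z ^ 2 ≠ 0)
    (hode : F₁ + (n - s) * F₀ ^ 2 + ((2 * s - n - 1) * z / ((1 - z ^ 2) / 2) + n / z) * F₀ +
      (2 * s - n - 1) / ((1 - z ^ 2) / 2) = 0)
    (hF₀ : z * F₀ = -1) : F₀ + z * F₁ = (s - 1) / z := by
  have hF₀' : F₀ = -1 / z := by field_simp; linarith
  subst hF₀'
  have hF₁ : F₁ * z ^ 2 = s := by
    field_simp at hode
    have h : (F₁ * z ^ 2 - s) * (1 - z ^ 2) = 0 := by linear_combination hode
    linear_combination (mul_eq_zero.mp h).resolve_right hz1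
  field_simp
  linear_combination hF₁

theorem ode_one_plus_rF_general (n : ℕ) (s : ℝ)
    (hs : s ∈ Set.Ioo ((n : ℝ) / 2 + 1) (n : ℝ))
    (F : ℝ → ℝ)
    (hF : ContDiffOn ℝ 1 F (Set.Ico (0 : ℝ) 1))
    (hODE : ∀ r ∈ Set.Ioo (0 : ℝ) 1,
      deriv F r + ((n : ℝ) - s) * (F r) ^ 2 +
        ((2 * s - (n : ℝ) - 1) * r / ((1 - r ^ 2) / 2) + (n : ℝ) / r) * F r +
        (2 * s - (n : ℝ) - 1) / ((1 - r ^ 2) / 2) = 0)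
    (hFneg : ∀ r ∈ Set.Ico (0 : ℝ) 1, F r ≤ 0) :
    ∀ r ∈ Set.Ico (0 : ℝ) 1, 0 < 1 + r * F r ∧ 1 + r * F r ≤ 1 := by
  intro r hr
  refine ⟨?_, by nlinarith [hFneg r hr, hr.1]⟩
  have hs1 : 1 < s := by linarith [hs.1, (Nat.cast_nonneg n : (0 : ℝ) ≤ n)]
  have hGc : ContinuousOn (fun x => 1 + x * F x) (Icc 0 r) :=
    continuousOn_const.add (continuousOn_id.mul (hF.continuousOn.mono (Icc_subset_Ico_right hr.2)))
  refine hGc.pos_of_hasDerivWithinAt_Iio_pos_of_eq_zero (by simp) ?_ r ⟨hr.1, le_rfl⟩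
  intro z ⟨hz0, hzr⟩ hGz
  have hz1 : z < 1 := hzr.trans_lt hr.2
  have hFd : DifferentiableAt ℝ F z :=
    (hF.differentiableOn one_ne_zero).differentiableAt (Ico_mem_nhds hz0 hz1)
  refine ⟨(s - 1) / z, div_pos (by linarith) hz0, ?_⟩
  have hG' : HasDerivAt (fun x => 1 + x * F x) (1 * F z + z * deriv F z) z :=
    ((hasDerivAt_id' z).mul hFd.hasDerivAt).const_add 1
  refine (hG'.congr_deriv ?_).hasDerivWithinAt
  rw [one_mul]
  exact add_mul_eq_of_riccati_of_mul_eq_neg_one hz0.ne' (by nlinarith) (hODE z ⟨hz0, hz1⟩)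
    (by linarith)

theorem ode_one_plus_rF (n : ℕ) (hn : 4 ≤ n) (s : ℝ)
    (hs : s ∈ Set.Ioo ((n : ℝ) / 2 + 1) (n : ℝ))
    (F : ℝ → ℝ)
    (hF : ContDiffOn ℝ 1 F (Set.Ico (0 : ℝ) 1))
    (hODE : ∀ r ∈ Set.Ioo (0 : ℝ) 1,
      deriv F r + ((n : ℝ) - s) * (F r) ^ 2 +
        ((2 * s - (n : ℝ) - 1) * r / ((1 - r ^ 2) / 2) + (n : ℝ) / r) * F r +
        (2 * s - (n : ℝ) - 1) / ((1 - r ^ 2) / 2) = 0)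
    (hF0 : F 0 = 0)
    (hFneg : ∀ r ∈ Set.Ico (0 : ℝ) 1, F r ≤ 0) :
    ∀ r ∈ Set.Ico (0 : ℝ) 1, 0 < 1 + r * F r ∧ 1 + r * F r ≤ 1 :=
  ode_one_plus_rF_general n s hs F hF hODE hFneg
end
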